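/- arXiv:q-alg/9609033 — 6 statements merged into one kernel-verified Lean document; each statement's English description precedes it below -/
import Mathlib

section
/- For all sites r, s : Fin L with r > s, the anyonic oscillators satisfy the braiding relations: a(r)a(s) + q⁻¹ a(s)a(r) = 0, a†(r)a†(s) + q⁻¹ a†(s)a†(r) = 0, a†(r)a(s) + q a(s)a†(r) = 0, and a(r)a†(s) + q a†(s)a(r) = 0 (as linear maps on V). -/
/-!
Anyonic oscillators on a one-dimensional lattice `Fin L`, built from fermionic
oscillators on the fermionic Fock space `(Fin L → Bool) →₀ ℂ` and disorder factors.
-/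

noncomputable section

/-- The fermionic Fock space on a lattice of `L` sites. -/
abbrev FSpace (L : ℕ) : Type := (Fin L → Bool) →₀ ℂ

/-- The Jordan–Wigner sign `(−1)^{#{t < r : f t = true}}`. -/
def fSign {L : ℕ} (f : Fin L → Bool) (r : Fin L) : ℂ :=
  (-1 : ℂ) ^ (Finset.univ.filter fun t => t < r ∧ f t = true).card

/-- The fermionic annihilation operator `c(r)`. -/
def cAnn {L : ℕ} (r : Fin L) : Module.End ℂ (FSpace L) :=
  Finsupp.lift (FSpace L) ℂ (Fin L → Bool) fun f =>
    if f r = true then fSign f r • Finsupp.single (Function.update f r false) (1 : ℂ) else 0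

/-- The fermionic creation operator `c†(r)`. -/
def cCre {L : ℕ} (r : Fin L) : Module.End ℂ (FSpace L) :=
  Finsupp.lift (FSpace L) ℂ (Fin L → Bool) fun f =>
    if f r = false then fSign f r • Finsupp.single (Function.update f r true) (1 : ℂ) else 0

/-- The exponent `Σ_t ε(t−r) f(t)`, where `ε` is the sign function. -/
def fExp {L : ℕ} (r : Fin L) (f : Fin L → Bool) : ℤ :=
  ∑ t : Fin L, Int.sign (((t : ℕ) : ℤ) - ((r : ℕ) : ℤ)) * (if f t = true then 1 else 0)

/-- The disorder operator `K⁺(r) : |f⟩ ↦ p^{Σ_t ε(t−r) f(t)} |f⟩`. -/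
def Kplus {L : ℕ} (p : ℂ) (r : Fin L) : Module.End ℂ (FSpace L) :=
  Finsupp.lift (FSpace L) ℂ (Fin L → Bool) fun f =>
    (p ^ fExp r f) • Finsupp.single f (1 : ℂ)

/-- The disorder operator `K⁻(r) : |f⟩ ↦ p^{−Σ_t ε(t−r) f(t)} |f⟩`. -/
def Kminus {L : ℕ} (p : ℂ) (r : Fin L) : Module.End ℂ (FSpace L) :=
  Finsupp.lift (FSpace L) ℂ (Fin L → Bool) fun f =>
    (p ^ (-fExp r f)) • Finsupp.single f (1 : ℂ)

/-- The anyonic oscillator `a(r) = K⁻(r) ∘ c(r)`. -/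
def aAnn {L : ℕ} (p : ℂ) (r : Fin L) : Module.End ℂ (FSpace L) := Kminus p r * cAnn r

/-- The anyonic oscillator `a†(r) = K⁺(r) ∘ c†(r)`. -/
def aCre {L : ℕ} (p : ℂ) (r : Fin L) : Module.End ℂ (FSpace L) := Kplus p r * cCre r

/-!
Each of `a(r)`, `a†(r)` sends a basis vector `|f⟩` either to `0` or to a multiple of `|f'⟩`, where
`f'` flips the occupation of site `r`. For `s < r`, both orders of the two operators reach the same
state under the same conditions on `f r`, `f s`. The Jordan–Wigner string of `r` passes through `s`
but not conversely, so the fermionic signs of the two orders differ by `-1`. Flipping `s` changes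
the disorder exponent at `r` by minus the occupation change at `s`, while flipping `r` changes the
exponent at `s` by plus the occupation change at `r`; together this gives the relative factor
`p^{∓2} = q^{∓1}`.
-/

lemma Finsupp.lift_apply_single {R M X : Type*} [Semiring R] [AddCommMonoid M] [Module R M]
    (g : X → M) (a : X) (x : R) : Finsupp.lift M R X g (Finsupp.single a x) = x • g a := by
  simp [Finsupp.lift_apply, Finsupp.sum_single_index]

lemma zpow_braiding_exponent {K : Type*} [Field K] {p : K} (hp : p ≠ 0) (d e m n : ℤ) :
    p ^ (d * (m - e)) * p ^ (e * n) = (p ^ 2) ^ (-(d * e)) * (p ^ (e * (n + d)) * p ^ (d * m)) := by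
  rw [← zpow_natCast, ← zpow_mul, ← zpow_add₀ hp, ← zpow_add₀ hp, ← zpow_add₀ hp]
  ring_nf

section Braiding

variable {L : ℕ}

lemma fSign_eq_prod (f : Fin L → Bool) (r : Fin L) :
    fSign f r = ∏ t ∈ Finset.univ.filter (· < r), if f t then (-1 : ℂ) else 1 := by
  rw [fSign, Finset.prod_ite, Finset.prod_const, Finset.prod_const, one_pow, mul_one,
    Finset.filter_filter]

lemma fSign_update_of_lt (f : Fin L → Bool) {s r : Fin L} (h : s < r) (v : Bool) :
    fSign (Function.update f r v) s = fSign f s := by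
  have hr : r ∉ Finset.univ.filter (· < s) := by simpa using h.le
  rw [fSign_eq_prod, fSign_eq_prod]
  simp_rw [Function.apply_update (fun _ b => if b = true then (-1 : ℂ) else 1)]
  exact Finset.prod_update_of_notMem hr _ _

lemma fSign_update_not_of_lt (f : Fin L → Bool) {s r : Fin L} (h : s < r) :
    fSign (Function.update f s (!f s)) r = -fSign f r := by
  have hs : s ∈ Finset.univ.filter (· < r) := by simpa using h
  rw [fSign_eq_prod, fSign_eq_prod]
  simp_rw [Function.apply_update (fun _ b => if b = true then (-1 : ℂ) else 1)]
  rw [Finset.prod_update_of_mem hs, Finset.prod_eq_mul_prod_sdiff_singleton_of_mem hs]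
  cases f s <;> simp

lemma fExp_update (r s : Fin L) (f : Fin L → Bool) (v : Bool) :
    fExp r (Function.update f s v) = fExp r f
      + Int.sign ((s : ℤ) - r) * ((if v = true then 1 else 0) - (if f s = true then 1 else 0)) := by
  rw [← sub_eq_iff_eq_add', fExp, fExp, ← Finset.sum_sub_distrib,
    Finset.sum_eq_single_of_mem s (Finset.mem_univ s), Function.update_self, mul_sub]
  intro t _ hts
  rw [Function.update_of_ne hts, sub_self]

lemma fExp_update_self (r : Fin L) (f : Fin L → Bool) (v : Bool) :
    fExp r (Function.update f r v) = fExp r f := by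
  simp [fExp_update]

-- The change of occupation when a site holding `b` is flipped; it is also the sign of the
-- disorder exponent carried by `anyonOp p r b`.
def occChange (b : Bool) : ℤ := if b then -1 else 1

lemma fExp_update_not (r s : Fin L) (f : Fin L → Bool) :
    fExp r (Function.update f s (!f s)) = fExp r f + Int.sign ((s : ℤ) - r) * occChange (f s) := by
  rw [fExp_update]
  cases f s <;> rfl

lemma Kplus_single (p : ℂ) (r : Fin L) (f : Fin L → Bool) (x : ℂ) :
    Kplus p r (Finsupp.single f x) = Finsupp.single f (p ^ fExp r f * x) := by
  simp only [Kplus, Finsupp.lift_apply_single, Finsupp.smul_single, smul_eq_mul, mul_one, mul_comm]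

lemma Kminus_single (p : ℂ) (r : Fin L) (f : Fin L → Bool) (x : ℂ) :
    Kminus p r (Finsupp.single f x) = Finsupp.single f (p ^ (-fExp r f) * x) := by
  simp only [Kminus, Finsupp.lift_apply_single, Finsupp.smul_single, smul_eq_mul, mul_one, mul_comm]

lemma cAnn_single (r : Fin L) (f : Fin L → Bool) (x : ℂ) :
    cAnn r (Finsupp.single f x) =
      if f r = true then Finsupp.single (Function.update f r false) (fSign f r * x) else 0 := by
  rw [cAnn, Finsupp.lift_apply_single]
  split_ifs
  · simp only [Finsupp.smul_single, smul_eq_mul, mul_one, mul_comm]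
  · exact smul_zero x

lemma cCre_single (r : Fin L) (f : Fin L → Bool) (x : ℂ) :
    cCre r (Finsupp.single f x) =
      if f r = false then Finsupp.single (Function.update f r true) (fSign f r * x) else 0 := by
  rw [cCre, Finsupp.lift_apply_single]
  split_ifs
  · simp only [Finsupp.smul_single, smul_eq_mul, mul_one, mul_comm]
  · exact smul_zero x

def anyonOp (p : ℂ) (r : Fin L) (b : Bool) : Module.End ℂ (FSpace L) :=
  if b then aAnn p r else aCre p r

lemma anyonOp_single (p : ℂ) (r : Fin L) (b : Bool) (f : Fin L → Bool) (x : ℂ) :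
    anyonOp p r b (Finsupp.single f x) = if f r = b then
      Finsupp.single (Function.update f r (!b)) (p ^ (occChange b * fExp r f) * (fSign f r * x))
      else 0 := by
  cases b
  · simp only [anyonOp, aCre, Bool.false_eq_true, if_false, Module.End.mul_apply, cCre_single]
    split_ifs
    · rw [Kplus_single, fExp_update_self, occChange, if_neg Bool.false_ne_true, one_mul,
        Bool.not_false]
    · exact map_zero _
  · simp only [anyonOp, aAnn, if_true, Module.End.mul_apply, cAnn_single]
    split_ifs
    · rw [Kminus_single, fExp_update_self, occChange, if_pos rfl, neg_one_mul, Bool.not_true]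
    · exact map_zero _

lemma anyonOp_single_of_ne (p : ℂ) {r : Fin L} {b : Bool} {f : Fin L → Bool} (h : f r ≠ b)
    (x : ℂ) : anyonOp p r b (Finsupp.single f x) = 0 := by
  rw [anyonOp_single, if_neg h]

theorem anyonOp_braid {p : ℂ} (hp : p ≠ 0) {r s : Fin L} (hsr : s < r) (b c : Bool) :
    anyonOp p r b * anyonOp p s c
      + (p ^ 2) ^ (-(occChange b * occChange c)) • (anyonOp p s c * anyonOp p r b) = 0 := by
  refine Finsupp.lhom_ext fun f x => ?_
  simp only [LinearMap.add_apply, Module.End.mul_apply, LinearMap.smul_apply,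
    LinearMap.zero_apply]
  by_cases hs : f s = c; swap
  · rw [anyonOp_single_of_ne p hs, map_zero, zero_add, anyonOp_single]
    split_ifs
    · rw [anyonOp_single_of_ne p (by rwa [Function.update_of_ne hsr.ne]), smul_zero]
    · rw [map_zero, smul_zero]
  by_cases hr : f r = b; swap
  · rw [anyonOp_single_of_ne p hr, map_zero, smul_zero, add_zero, anyonOp_single, if_pos hs,
      anyonOp_single_of_ne p (by rwa [Function.update_of_ne hsr.ne'])]
  subst hs hr
  rw [anyonOp_single, if_pos rfl, anyonOp_single, if_pos (Function.update_of_ne hsr.ne' _ _),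
    anyonOp_single, if_pos rfl, anyonOp_single, if_pos (Function.update_of_ne hsr.ne _ _),
    Function.update_comm hsr.ne, fSign_update_not_of_lt f hsr, fSign_update_of_lt f hsr,
    fExp_update_not, fExp_update_not, Finsupp.smul_single, ← Finsupp.single_add,
    Int.sign_eq_neg_one_of_neg (by omega), Int.sign_eq_one_of_pos (by omega)]
  rw [Finsupp.single_eq_zero, smul_eq_mul, neg_one_mul, ← sub_eq_add_neg, one_mul]
  linear_combination -(fSign f s * fSign f r * x) *
    zpow_braiding_exponent hp (occChange (f r)) (occChange (f s)) (fExp r f) (fExp s f)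

end Braiding

theorem anyon_braiding_general (L : ℕ) (p : ℂ) (hp : p ≠ 0)
    (q : ℂ) (hq : q = p ^ 2) (r s : Fin L) (hrs : s < r) :
    aAnn p r * aAnn p s + q⁻¹ • (aAnn p s * aAnn p r) = 0 ∧
    aCre p r * aCre p s + q⁻¹ • (aCre p s * aCre p r) = 0 ∧
    aCre p r * aAnn p s + q • (aAnn p s * aCre p r) = 0 ∧
    aAnn p r * aCre p s + q • (aCre p s * aAnn p r) = 0 := by
  subst hq
  refine ⟨?_, ?_, ?_, ?_⟩
  · simpa [anyonOp, occChange] using anyonOp_braid hp hrs true true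
  · simpa [anyonOp, occChange] using anyonOp_braid hp hrs false false
  · simpa [anyonOp, occChange] using anyonOp_braid hp hrs false true
  · simpa [anyonOp, occChange] using anyonOp_braid hp hrs true false

/-- braiding relations between anyonic oscillators at sites `r > s`. -/
theorem anyon_braiding (L : ℕ) (hL : 1 ≤ L) (p : ℂ) (hp : p ≠ 0)
    (q : ℂ) (hq : q = p ^ 2) (r s : Fin L) (hrs : s < r) :
    aAnn p r * aAnn p s + q⁻¹ • (aAnn p s * aAnn p r) = 0 ∧
    aCre p r * aCre p s + q⁻¹ • (aCre p s * aCre p r) = 0 ∧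
    aCre p r * aAnn p s + q • (aAnn p s * aCre p r) = 0 ∧
    aAnn p r * aCre p s + q • (aCre p s * aAnn p r) = 0 :=
  anyon_braiding_general L p hp q hq r s hrs

end
end

section
/- For all sites r, s : Fin L with r > s, the bosonic anyons satisfy the braiding relations: A(r)A(s) − q A(s)A(r) = 0, A†(r)A†(s) − q A†(s)A†(r) = 0, A†(r)A(s) − q⁻¹ A(s)A†(r) = 0, and A(r)A†(s) − q⁻¹ A†(s)A(r) = 0. -/
/-!
Bosonic anyons on a one-dimensional lattice `Fin L`, built from `q`-deformed
bosonic oscillators on the bosonic Fock space `(Fin L → ℕ) →₀ ℂ` and disorder factors.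
-/

noncomputable section

/-- The bosonic Fock space on a lattice of `L` sites. -/
abbrev BSpace (L : ℕ) : Type := (Fin L → ℕ) →₀ ℂ

/-- The `q`-integer `[x]_q = (q^x − q^{−x})/(q − q⁻¹)`. -/
def qInt (q : ℂ) (x : ℤ) : ℂ := (q ^ x - q ^ (-x)) / (q - q⁻¹)

/-- The `q`-deformed bosonic annihilation operator
`b(r) : |g⟩ ↦ s(g r) |g[r ↦ g r − 1]⟩` (zero if `g r = 0`). -/
def bAnn {L : ℕ} (s : ℤ → ℂ) (r : Fin L) : Module.End ℂ (BSpace L) :=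
  Finsupp.lift (BSpace L) ℂ (Fin L → ℕ) fun g =>
    if g r = 0 then 0
    else s (g r) • Finsupp.single (Function.update g r (g r - 1)) (1 : ℂ)

/-- The `q`-deformed bosonic creation operator
`b†(r) : |g⟩ ↦ s(g r + 1) |g[r ↦ g r + 1]⟩`. -/
def bCre {L : ℕ} (s : ℤ → ℂ) (r : Fin L) : Module.End ℂ (BSpace L) :=
  Finsupp.lift (BSpace L) ℂ (Fin L → ℕ) fun g =>
    s ((g r : ℤ) + 1) • Finsupp.single (Function.update g r (g r + 1)) (1 : ℂ)

/-- The exponent `Σ_t ε(t−r) g(t)`, where `ε` is the sign function. -/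
def bExp {L : ℕ} (r : Fin L) (g : Fin L → ℕ) : ℤ :=
  ∑ t : Fin L, Int.sign (((t : ℕ) : ℤ) - ((r : ℕ) : ℤ)) * (g t : ℤ)

/-- The disorder operator `K'⁺(r) : |g⟩ ↦ p^{Σ_t ε(t−r) g(t)} |g⟩`. -/
def K'plus {L : ℕ} (p : ℂ) (r : Fin L) : Module.End ℂ (BSpace L) :=
  Finsupp.lift (BSpace L) ℂ (Fin L → ℕ) fun g =>
    (p ^ bExp r g) • Finsupp.single g (1 : ℂ)

/-- The disorder operator `K'⁻(r) : |g⟩ ↦ p^{−Σ_t ε(t−r) g(t)} |g⟩`. -/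
def K'minus {L : ℕ} (p : ℂ) (r : Fin L) : Module.End ℂ (BSpace L) :=
  Finsupp.lift (BSpace L) ℂ (Fin L → ℕ) fun g =>
    (p ^ (-bExp r g)) • Finsupp.single g (1 : ℂ)

/-- The bosonic anyonic oscillator `A(r) = K'⁺(r) ∘ b(r)`. -/
def AAnn {L : ℕ} (p : ℂ) (s : ℤ → ℂ) (r : Fin L) : Module.End ℂ (BSpace L) :=
  K'plus p r * bAnn s r

/-- The bosonic anyonic oscillator `A†(r) = K'⁻(r) ∘ b†(r)`. -/
def ACre {L : ℕ} (p : ℂ) (s : ℤ → ℂ) (r : Fin L) : Module.End ℂ (BSpace L) :=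
  K'minus p r * bCre s r

/-- The diagonal operator `q^{σ·n'(r)} : |g⟩ ↦ q^{σ·g(r)} |g⟩`. -/
def qPowN {L : ℕ} (q : ℂ) (σ : ℤ) (r : Fin L) : Module.End ℂ (BSpace L) :=
  Finsupp.lift (BSpace L) ℂ (Fin L → ℕ) fun g =>
    (q ^ (σ * (g r : ℤ))) • Finsupp.single g (1 : ℂ)


lemma lift_single {L : ℕ} (f : (Fin L → ℕ) → BSpace L) (g : Fin L → ℕ) (c : ℂ) :
    Finsupp.lift (BSpace L) ℂ (Fin L → ℕ) f (Finsupp.single g c) = c • f g := by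
  simp [Finsupp.lift_apply, Finsupp.sum_single_index]

lemma bExp_update {L : ℕ} (r u : Fin L) (g : Fin L → ℕ) (m : ℕ) :
    bExp r (Function.update g u m) =
      bExp r g + Int.sign (((u : ℕ) : ℤ) - ((r : ℕ) : ℤ)) * ((m : ℤ) - (g u : ℤ)) := by
  unfold bExp
  have h : ∀ x : Fin L, Int.sign (((x : ℕ) : ℤ) - ((r : ℕ) : ℤ)) * ((Function.update g u m x : ℕ) : ℤ)
      = Int.sign (((x : ℕ) : ℤ) - ((r : ℕ) : ℤ)) * (g x : ℤ)
        + (if x = u then Int.sign (((u : ℕ) : ℤ) - ((r : ℕ) : ℤ)) * ((m : ℤ) - (g u : ℤ)) else 0) := by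
    intro x
    by_cases hx : x = u
    · subst hx; simp [Function.update_self]; ring
    · simp [Function.update_of_ne hx, hx]
  simp only [h, Finset.sum_add_distrib, Finset.sum_ite_eq', Finset.mem_univ, if_pos]

/-- braiding relations of the bosonic anyons at sites `r > s`. -/
theorem bosonic_anyon_braiding (L : ℕ) (hL : 1 ≤ L) (p : ℂ) (hp : p ≠ 0)
    (hp4 : p ^ 4 ≠ 1) (q : ℂ) (hq : q = p ^ 2)
    (s : ℤ → ℂ) (hs : ∀ n : ℤ, s n ^ 2 = qInt q n)
    (r t : Fin L) (hrt : t < r) :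
    AAnn p s r * AAnn p s t - q • (AAnn p s t * AAnn p s r) = 0 ∧
    ACre p s r * ACre p s t - q • (ACre p s t * ACre p s r) = 0 ∧
    ACre p s r * AAnn p s t - q⁻¹ • (AAnn p s t * ACre p s r) = 0 ∧
    AAnn p s r * ACre p s t - q⁻¹ • (ACre p s t * AAnn p s r) = 0 := by
  have hne : r ≠ t := hrt.ne'
  have hne' : t ≠ r := hrt.ne
  have hlt : (t : ℕ) < (r : ℕ) := hrt
  have htr : Int.sign (((t:ℕ):ℤ) - ((r:ℕ):ℤ)) = -1 := by
    apply Int.sign_eq_neg_one_of_neg; omega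
  have hrt1 : Int.sign (((r:ℕ):ℤ) - ((t:ℕ):ℤ)) = 1 := by
    apply Int.sign_eq_one_of_pos; omega
  have hz : ∀ n : ℤ, p ^ n ≠ 0 := fun n => zpow_ne_zero n hp
  refine ⟨?_, ?_, ?_, ?_⟩
  · apply Finsupp.lhom_ext
    intro g c
    simp only [AAnn, bAnn, K'plus, Module.End.mul_apply, LinearMap.sub_apply,
      LinearMap.smul_apply, LinearMap.zero_apply, lift_single, map_smul, smul_ite,
      smul_zero]
    by_cases h1 : g t = 0
    · by_cases h2 : g r = 0 <;>
      · simp only [h1, h2, eq_self_iff_true, if_true, if_false, iff_false, lift_single,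
          map_smul, map_zero, smul_zero, Function.update_of_ne hne, Function.update_of_ne hne']
        simp
    by_cases h2 : g r = 0
    · simp only [h1, h2, eq_self_iff_true, if_true, if_false, iff_false, lift_single,
        map_smul, map_zero, smul_zero, Function.update_of_ne hne, Function.update_of_ne hne']
      simp
    simp only [h1, h2, if_neg, Function.update_of_ne hne, Function.update_of_ne hne',
      lift_single, map_smul, smul_smul, if_false]
    simp only [Function.update_comm hne']
    rw [sub_eq_zero]
    congr 1
    simp only [bExp_update, htr, hrt1, Function.update_of_ne hne', Function.update_of_ne hne,
      Function.update_self, sub_self, Int.sign_zero, zero_mul, add_zero, one_mul,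
      Nat.cast_sub (Nat.one_le_iff_ne_zero.2 h1), Nat.cast_sub (Nat.one_le_iff_ne_zero.2 h2),
      Nat.cast_one, neg_mul, neg_sub, sub_sub_cancel, mul_one]
    ring_nf
    simp only [zpow_add₀ hp, zpow_sub₀ hp, zpow_neg, zpow_one, hq]
    field_simp [hp, hz]
  · apply Finsupp.lhom_ext
    intro g c
    simp only [ACre, bCre, K'minus, Module.End.mul_apply, LinearMap.sub_apply,
      LinearMap.smul_apply, LinearMap.zero_apply, lift_single, map_smul, smul_smul]
    simp only [Function.update_of_ne hne, Function.update_of_ne hne',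
      Function.update_comm hne']
    rw [sub_eq_zero]
    congr 1
    simp only [bExp_update, htr, hrt1, Function.update_of_ne hne', Function.update_of_ne hne,
      Function.update_self, sub_self, Int.sign_zero, zero_mul, add_zero, one_mul,
      Nat.cast_add, Nat.cast_one, neg_mul, neg_sub, mul_one, add_sub_cancel_left]
    ring_nf
    simp only [zpow_add₀ hp, zpow_sub₀ hp, zpow_neg, zpow_one, hq]
    field_simp [hp, hz]
  · apply Finsupp.lhom_ext
    intro g c
    simp only [AAnn, ACre, bAnn, bCre, K'plus, K'minus, Module.End.mul_apply,
      LinearMap.sub_apply, LinearMap.smul_apply, LinearMap.zero_apply, lift_single,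
      map_smul, smul_ite, smul_zero]
    by_cases h1 : g t = 0
    · simp only [h1, eq_self_iff_true, if_true, if_false, iff_false, lift_single,
        map_smul, map_zero, smul_zero, Function.update_of_ne hne, Function.update_of_ne hne']
      simp
    simp only [h1, if_neg, Function.update_of_ne hne, Function.update_of_ne hne',
      lift_single, map_smul, smul_smul, if_false]
    simp only [Function.update_comm hne']
    rw [sub_eq_zero]
    congr 1
    simp only [bExp_update, htr, hrt1, Function.update_of_ne hne', Function.update_of_ne hne,
      Function.update_self, sub_self, Int.sign_zero, zero_mul, add_zero, one_mul,
      Nat.cast_sub (Nat.one_le_iff_ne_zero.2 h1), Nat.cast_add,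
      Nat.cast_one, neg_mul, neg_sub, sub_sub_cancel, mul_one, add_sub_cancel_left]
    ring_nf
    simp only [zpow_add₀ hp, zpow_sub₀ hp, zpow_neg, zpow_one, hq]
    field_simp [hp, hz]
  · apply Finsupp.lhom_ext
    intro g c
    simp only [AAnn, ACre, bAnn, bCre, K'plus, K'minus, Module.End.mul_apply,
      LinearMap.sub_apply, LinearMap.smul_apply, LinearMap.zero_apply, lift_single,
      map_smul, smul_ite, smul_zero]
    by_cases h2 : g r = 0
    · simp only [h2, eq_self_iff_true, if_true, if_false, iff_false, lift_single,
        map_smul, map_zero, smul_zero, Function.update_of_ne hne, Function.update_of_ne hne']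
      simp
    simp only [h2, if_neg, Function.update_of_ne hne, Function.update_of_ne hne',
      lift_single, map_smul, smul_smul, if_false]
    simp only [Function.update_comm hne']
    rw [sub_eq_zero]
    congr 1
    simp only [bExp_update, htr, hrt1, Function.update_of_ne hne', Function.update_of_ne hne,
      Function.update_self, sub_self, Int.sign_zero, zero_mul, add_zero, one_mul,
      Nat.cast_sub (Nat.one_le_iff_ne_zero.2 h2), Nat.cast_add,
      Nat.cast_one, neg_mul, neg_sub, sub_sub_cancel, mul_one, add_sub_cancel_left]
    ring_nf
    simp only [zpow_add₀ hp, zpow_sub₀ hp, zpow_neg, zpow_one, hq]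
    field_simp [hp, hz]


end
end

section
/- For every i with 1 ≤ i ≤ M−1 and every site r : Fin L, the local anyonic generators factorize as undeformed local generators times a disorder factor: a_i†(r) a_{i+1}(r) = (c_i†(r) c_{i+1}(r)) ∘ D_i(r) and ã_{i+1}†(r) ã_i(r) = (c_{i+1}†(r) c_i(r)) ∘ D_i(r), where D_i(r) is the diagonal operator |f, g⟩ ↦ p^{Σ_t ε(t−r)(f(i,t) − f(i+1,t))} |f, g⟩ (that is, q_i^{(1/2)Σ_t ε(t−r) h_i(t)} with h_i(t) the local Cartan eigenvalue f(i,t) − f(i+1,t) and q_i = q). -/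
/-!
Anyonic realization of `U_q(A(M−1,N−1))` on the mixed Fock space of `M` fermionic
and `N` (`q`-deformed) bosonic colours on a one-dimensional lattice `Fin L`.
-/

noncomputable section

/-- Configurations: fermionic occupations (Bool) and bosonic occupations (ℕ). -/
abbrev Cfg (M N L : ℕ) : Type := ((Fin M × Fin L) → Bool) × ((Fin N × Fin L) → ℕ)

/-- The mixed Fock space. -/
abbrev FS (M N L : ℕ) : Type := Cfg M N L →₀ ℂ

/-- Lexicographic order on the fermionic modes `(i, r)`. -/
def lexLt {M L : ℕ} (x y : Fin M × Fin L) : Prop :=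
  x.1 < y.1 ∨ (x.1 = y.1 ∧ x.2 < y.2)

instance {M L : ℕ} (x y : Fin M × Fin L) : Decidable (lexLt x y) := by
  unfold lexLt; infer_instance

/-- The Jordan–Wigner sign `(−1)^{#{(j,t) < (i,r) : f(j,t) = true}}`. -/
def fSgn {M L : ℕ} (f : (Fin M × Fin L) → Bool) (i : Fin M) (r : Fin L) : ℂ :=
  (-1 : ℂ) ^ (Finset.univ.filter fun jt : Fin M × Fin L => lexLt jt (i, r) ∧ f jt = true).card

/-- The fermionic annihilation operator `c_i(r)`. -/
def cA (M N L : ℕ) (i : Fin M) (r : Fin L) : Module.End ℂ (FS M N L) :=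
  Finsupp.lift (FS M N L) ℂ (Cfg M N L) fun x =>
    if x.1 (i, r) = true then
      fSgn x.1 i r • Finsupp.single (Function.update x.1 (i, r) false, x.2) (1 : ℂ)
    else 0

/-- The fermionic creation operator `c_i†(r)`. -/
def cC (M N L : ℕ) (i : Fin M) (r : Fin L) : Module.End ℂ (FS M N L) :=
  Finsupp.lift (FS M N L) ℂ (Cfg M N L) fun x =>
    if x.1 (i, r) = false then
      fSgn x.1 i r • Finsupp.single (Function.update x.1 (i, r) true, x.2) (1 : ℂ)
    else 0

/-- The fermionic number operator `n_i(r)`. -/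
def nF (M N L : ℕ) (i : Fin M) (r : Fin L) : Module.End ℂ (FS M N L) :=
  Finsupp.lift (FS M N L) ℂ (Cfg M N L) fun x =>
    (if x.1 (i, r) = true then (1 : ℂ) else 0) • Finsupp.single x (1 : ℂ)

/-- The `q`-deformed bosonic annihilation operator `b_k(r)`. -/
def bA (M N L : ℕ) (s : ℤ → ℂ) (k : Fin N) (r : Fin L) : Module.End ℂ (FS M N L) :=
  Finsupp.lift (FS M N L) ℂ (Cfg M N L) fun x =>
    if x.2 (k, r) = 0 then 0
    else s (x.2 (k, r)) •
      Finsupp.single (x.1, Function.update x.2 (k, r) (x.2 (k, r) - 1)) (1 : ℂ)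

/-- The `q`-deformed bosonic creation operator `b_k†(r)`. -/
def bC (M N L : ℕ) (s : ℤ → ℂ) (k : Fin N) (r : Fin L) : Module.End ℂ (FS M N L) :=
  Finsupp.lift (FS M N L) ℂ (Cfg M N L) fun x =>
    s ((x.2 (k, r) : ℤ) + 1) •
      Finsupp.single (x.1, Function.update x.2 (k, r) (x.2 (k, r) + 1)) (1 : ℂ)

/-- The bosonic number operator `n'_k(r)`. -/
def nB (M N L : ℕ) (k : Fin N) (r : Fin L) : Module.End ℂ (FS M N L) :=
  Finsupp.lift (FS M N L) ℂ (Cfg M N L) fun x =>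
    ((x.2 (k, r) : ℂ)) • Finsupp.single x (1 : ℂ)

/-- The fermionic disorder exponent `Σ_t ε(t−r) f(i,t)`. -/
def fEx {M N L : ℕ} (i : Fin M) (r : Fin L) (x : Cfg M N L) : ℤ :=
  ∑ t : Fin L, Int.sign (((t : ℕ) : ℤ) - ((r : ℕ) : ℤ)) * (if x.1 (i, t) = true then 1 else 0)

/-- The bosonic disorder exponent `Σ_t ε(t−r) g(k,t)`. -/
def gEx {M N L : ℕ} (k : Fin N) (r : Fin L) (x : Cfg M N L) : ℤ :=
  ∑ t : Fin L, Int.sign (((t : ℕ) : ℤ) - ((r : ℕ) : ℤ)) * (x.2 (k, t) : ℤ)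

/-- The fermionic disorder operator `F_i^σ(r) : |f,g⟩ ↦ p^{σ·Σ_t ε(t−r) f(i,t)}|f,g⟩`. -/
def Fdis (M N L : ℕ) (p : ℂ) (σ : ℤ) (i : Fin M) (r : Fin L) : Module.End ℂ (FS M N L) :=
  Finsupp.lift (FS M N L) ℂ (Cfg M N L) fun x =>
    (p ^ (σ * fEx i r x)) • Finsupp.single x (1 : ℂ)

/-- The bosonic disorder operator `G_k^σ(r) : |f,g⟩ ↦ p^{σ·Σ_t ε(t−r) g(k,t)}|f,g⟩`. -/
def Gdis (M N L : ℕ) (p : ℂ) (σ : ℤ) (k : Fin N) (r : Fin L) : Module.End ℂ (FS M N L) :=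
  Finsupp.lift (FS M N L) ℂ (Cfg M N L) fun x =>
    (p ^ (σ * gEx k r x)) • Finsupp.single x (1 : ℂ)

/-- The fermionic anyon `a_i(r) = F_i^−(r) ∘ c_i(r)`. -/
def aAny (M N L : ℕ) (p : ℂ) (i : Fin M) (r : Fin L) : Module.End ℂ (FS M N L) :=
  Fdis M N L p (-1) i r * cA M N L i r

/-- The fermionic anyon `a_i†(r) = F_i^+(r) ∘ c_i†(r)`. -/
def aDag (M N L : ℕ) (p : ℂ) (i : Fin M) (r : Fin L) : Module.End ℂ (FS M N L) :=
  Fdis M N L p 1 i r * cC M N L i r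

/-- The fermionic anyon `ã_i(r) = F_i^+(r) ∘ c_i(r)`. -/
def taAny (M N L : ℕ) (p : ℂ) (i : Fin M) (r : Fin L) : Module.End ℂ (FS M N L) :=
  Fdis M N L p 1 i r * cA M N L i r

/-- The fermionic anyon `ã_i†(r) = F_i^−(r) ∘ c_i†(r)`. -/
def taDag (M N L : ℕ) (p : ℂ) (i : Fin M) (r : Fin L) : Module.End ℂ (FS M N L) :=
  Fdis M N L p (-1) i r * cC M N L i r

/-- The bosonic anyon `A_k(r) = G_k^+(r) ∘ b_k(r)`. -/
def AAny (M N L : ℕ) (p : ℂ) (s : ℤ → ℂ) (k : Fin N) (r : Fin L) : Module.End ℂ (FS M N L) :=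
  Gdis M N L p 1 k r * bA M N L s k r

/-- The bosonic anyon `A_k†(r) = G_k^−(r) ∘ b_k†(r)`. -/
def ADag (M N L : ℕ) (p : ℂ) (s : ℤ → ℂ) (k : Fin N) (r : Fin L) : Module.End ℂ (FS M N L) :=
  Gdis M N L p (-1) k r * bC M N L s k r

/-- The bosonic anyon `Ã_k(r) = G_k^−(r) ∘ b_k(r)`. -/
def tAAny (M N L : ℕ) (p : ℂ) (s : ℤ → ℂ) (k : Fin N) (r : Fin L) : Module.End ℂ (FS M N L) :=
  Gdis M N L p (-1) k r * bA M N L s k r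

/-- The bosonic anyon `Ã_k†(r) = G_k^+(r) ∘ b_k†(r)`. -/
def tADag (M N L : ℕ) (p : ℂ) (s : ℤ → ℂ) (k : Fin N) (r : Fin L) : Module.End ℂ (FS M N L) :=
  Gdis M N L p 1 k r * bC M N L s k r

/-- The Cartan generator `H_α` (labels `α = 1, …, M+N−1`). -/
def Hg (M N L : ℕ) (α : ℕ) : Module.End ℂ (FS M N L) :=
  if h : 1 ≤ α ∧ α < M then
    ∑ r : Fin L, (nF M N L ⟨α - 1, by omega⟩ r - nF M N L ⟨α, by omega⟩ r)
  else if h : α = M ∧ 1 ≤ M ∧ 1 ≤ N then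
    ∑ r : Fin L, (nF M N L ⟨M - 1, by omega⟩ r + nB M N L ⟨0, by omega⟩ r)
  else if h : M < α ∧ α ≤ M + N - 1 then
    ∑ r : Fin L, (nB M N L ⟨α - M - 1, by omega⟩ r - nB M N L ⟨α - M, by omega⟩ r)
  else 0

/-- The raising generator `E_α^+` (labels `α = 1, …, M+N−1`). -/
def Ep (M N L : ℕ) (p : ℂ) (s : ℤ → ℂ) (α : ℕ) : Module.End ℂ (FS M N L) :=
  if h : 1 ≤ α ∧ α < M then
    ∑ r : Fin L, aDag M N L p ⟨α - 1, by omega⟩ r * aAny M N L p ⟨α, by omega⟩ r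
  else if h : α = M ∧ 1 ≤ M ∧ 1 ≤ N then
    ∑ r : Fin L, aDag M N L p ⟨M - 1, by omega⟩ r * AAny M N L p s ⟨0, by omega⟩ r
  else if h : M < α ∧ α ≤ M + N - 1 then
    ∑ r : Fin L, ADag M N L p s ⟨α - M - 1, by omega⟩ r * AAny M N L p s ⟨α - M, by omega⟩ r
  else 0

/-- The lowering generator `E_α^−` (labels `α = 1, …, M+N−1`). -/
def Em (M N L : ℕ) (p : ℂ) (s : ℤ → ℂ) (α : ℕ) : Module.End ℂ (FS M N L) :=
  if h : 1 ≤ α ∧ α < M then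
    ∑ r : Fin L, taDag M N L p ⟨α, by omega⟩ r * taAny M N L p ⟨α - 1, by omega⟩ r
  else if h : α = M ∧ 1 ≤ M ∧ 1 ≤ N then
    ∑ r : Fin L, tADag M N L p s ⟨0, by omega⟩ r * taAny M N L p ⟨M - 1, by omega⟩ r
  else if h : M < α ∧ α ≤ M + N - 1 then
    ∑ r : Fin L, tADag M N L p s ⟨α - M, by omega⟩ r * tAAny M N L p s ⟨α - M - 1, by omega⟩ r
  else 0

/-- The diagonal disorder factor
`D(r) : |f,g⟩ ↦ p^{Σ_t ε(t−r)(f(i₁,t) − f(i₂,t))} |f,g⟩`. -/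
def DfermDiag (M N L : ℕ) (p : ℂ) (i₁ i₂ : Fin M) (r : Fin L) : Module.End ℂ (FS M N L) :=
  Finsupp.lift (FS M N L) ℂ (Cfg M N L) fun x =>
    (p ^ (∑ t : Fin L, Int.sign (((t : ℕ) : ℤ) - ((r : ℕ) : ℤ)) *
        ((if x.1 (i₁, t) = true then 1 else 0) - (if x.1 (i₂, t) = true then 1 else 0)))) •
      Finsupp.single x (1 : ℂ)


section Aux
variable {M N L : ℕ}

lemma lift_single_s8 (F : Cfg M N L → FS M N L) (x : Cfg M N L) (b : ℂ) :
    Finsupp.lift (FS M N L) ℂ (Cfg M N L) F (Finsupp.single x b) = b • F x := by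
  simp [Finsupp.lift_apply, Finsupp.sum_single_index]

lemma fEx_update (i j : Fin M) (r : Fin L) (f : (Fin M × Fin L) → Bool)
    (g : (Fin N × Fin L) → ℕ) (v : Bool) :
    fEx (N := N) i r (Function.update f (j, r) v, g) = fEx (N := N) i r (f, g) := by
  unfold fEx
  refine Finset.sum_congr rfl fun t _ => ?_
  by_cases ht : t = r
  · subst ht; simp
  · have hne : (i, t) ≠ (j, r) := by
      simp only [ne_eq, Prod.mk.injEq, not_and]
      intro _ h; exact ht (by exact_mod_cast h)
    simp [Function.update_apply, hne]

lemma factor_general (p : ℂ) (hp : p ≠ 0) (σc σa : ℤ) (jc ja : Fin M) (hne : jc ≠ ja)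
    (r : Fin L) (E : Cfg M N L → ℤ)
    (hE : ∀ x, E x = σc * fEx jc r x + σa * fEx ja r x) :
    (Fdis M N L p σc jc r * cC M N L jc r) * (Fdis M N L p σa ja r * cA M N L ja r)
      = (cC M N L jc r * cA M N L ja r) *
        (Finsupp.lift (FS M N L) ℂ (Cfg M N L) fun x =>
          (p ^ (E x)) • Finsupp.single x (1 : ℂ)) := by
  refine Finsupp.lhom_ext fun x y => ?_
  simp only [Module.End.mul_apply]
  rw [lift_single_s8]
  unfold cA cC Fdis
  rw [lift_single_s8]
  have hupd : Function.update x.1 (ja, r) false (jc, r) = x.1 (jc, r) :=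
    Function.update_of_ne (by simp [Prod.ext_iff, hne]) _ _
  by_cases h1 : x.1 (ja, r) = true
  · by_cases h3 : x.1 (jc, r) = false
    · simp only [h1, h3, hupd, map_smul, lift_single_s8, smul_ite, smul_zero, map_zero,
        smul_smul, eq_self_iff_true, if_true, ite_true, one_mul, mul_one,
        Finsupp.smul_single, smul_eq_mul]
      have e1 : fEx (N := N) ja r (Function.update x.1 (ja, r) false, x.2) = fEx ja r x :=
        fEx_update ja ja r x.1 x.2 false
      have e2 : fEx (N := N) jc r
          (Function.update (Function.update x.1 (ja, r) false) (jc, r) true, x.2)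
          = fEx jc r x :=
        (fEx_update jc jc r _ x.2 true).trans (fEx_update jc ja r x.1 x.2 false)
      rw [e1, e2, hE x, zpow_add₀ hp]
      congr 1
      ring
    · simp only [h1, h3, hupd, map_smul, lift_single_s8, smul_ite, smul_zero, map_zero,
        smul_smul, eq_self_iff_true, if_true, ite_true, if_false, ite_false, one_mul, mul_one,
        Finsupp.smul_single, smul_eq_mul]
      simp [h3]
  · simp only [h1, map_smul, lift_single_s8, smul_ite, smul_zero, map_zero, smul_smul,
      if_false, ite_false, Finsupp.smul_single, smul_eq_mul]
    simp [h1]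

lemma hE_aux (i₁ i₂ : Fin M) (r : Fin L) (x : Cfg M N L) :
    (∑ t : Fin L, Int.sign (((t : ℕ) : ℤ) - ((r : ℕ) : ℤ)) *
        ((if x.1 (i₁, t) = true then 1 else 0) - (if x.1 (i₂, t) = true then 1 else 0)))
      = 1 * fEx i₁ r x + (-1) * fEx i₂ r x := by
  unfold fEx
  rw [one_mul, neg_one_mul, ← sub_eq_add_neg, ← Finset.sum_sub_distrib]
  exact Finset.sum_congr rfl fun t _ => by ring
end Aux
/-- factorization of the local even fermionic anyonic generators
(`1 ≤ i ≤ M−1`, one-based colour labels) as undeformed local generators times a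
disorder factor. -/
theorem local_fermionic_generator_factorization
    (M N L : ℕ) (hM : 1 ≤ M) (hN : 1 ≤ N) (hMN : 3 ≤ M + N) (hL : 1 ≤ L)
    (p : ℂ) (hp : p ≠ 0) (hp4 : p ^ 4 ≠ 1) (q : ℂ) (hq : q = p ^ 2)
    (s : ℤ → ℂ) (hs : ∀ n : ℤ, s n ^ 2 = qInt q n)
    (i : ℕ) (hi1 : 1 ≤ i) (hi2 : i ≤ M - 1) (r : Fin L) :
    aDag M N L p ⟨i - 1, by omega⟩ r * aAny M N L p ⟨i, by omega⟩ r
      = (cC M N L ⟨i - 1, by omega⟩ r * cA M N L ⟨i, by omega⟩ r) *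
          DfermDiag M N L p ⟨i - 1, by omega⟩ ⟨i, by omega⟩ r ∧
    taDag M N L p ⟨i, by omega⟩ r * taAny M N L p ⟨i - 1, by omega⟩ r
      = (cC M N L ⟨i, by omega⟩ r * cA M N L ⟨i - 1, by omega⟩ r) *
          DfermDiag M N L p ⟨i - 1, by omega⟩ ⟨i, by omega⟩ r := by
  have hne : (⟨i - 1, by omega⟩ : Fin M) ≠ ⟨i, by omega⟩ := by
    simp only [ne_eq, Fin.mk.injEq]; omega
  constructor
  · exact factor_general p hp 1 (-1) _ _ hne r _ (hE_aux _ _ r)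
  · exact factor_general p hp (-1) 1 _ _ hne.symm r _ (fun x => by
      rw [hE_aux _ _ r x]; ring)

end
end

section
/- For every k with 1 ≤ k ≤ N−1 and every site r : Fin L, the local bosonic anyonic generators factorize as q-boson local generators times a disorder factor with the inverse deformation parameter: A_k†(r) A_{k+1}(r) = (b_k†(r) b_{k+1}(r)) ∘ D_{M+k}(r) and Ã_{k+1}†(r) Ã_k(r) = (b_{k+1}†(r) b_k(r)) ∘ D_{M+k}(r), where D_{M+k}(r) is the diagonal operator |f, g⟩ ↦ p^{−Σ_t ε(t−r)(g(k,t) − g(k+1,t))} |f, g⟩ (that is, q_{M+k}^{(1/2)Σ_t ε(t−r) h_{M+k}(t)} with h_{M+k}(t) = g(k,t) − g(k+1,t) and q_{M+k} = q^{−1}). -/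
/-!
Anyonic realization of `U_q(A(M−1,N−1))` on the mixed Fock space of `M` fermionic
and `N` (`q`-deformed) bosonic colours on a one-dimensional lattice `Fin L`.
-/

noncomputable section

/-- The diagonal disorder factor with inverse deformation parameter,
`D(r) : |f,g⟩ ↦ p^{−Σ_t ε(t−r)(g(k₁,t) − g(k₂,t))} |f,g⟩`. -/
def DbosDiag (M N L : ℕ) (p : ℂ) (k₁ k₂ : Fin N) (r : Fin L) : Module.End ℂ (FS M N L) :=
  Finsupp.lift (FS M N L) ℂ (Cfg M N L) fun x =>
    (p ^ (-(∑ t : Fin L, Int.sign (((t : ℕ) : ℤ) - ((r : ℕ) : ℤ)) *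
        ((x.2 (k₁, t) : ℤ) - (x.2 (k₂, t) : ℤ))))) •
      Finsupp.single x (1 : ℂ)

lemma liftApp (M N L : ℕ) (F : Cfg M N L → FS M N L) (x : Cfg M N L) (c : ℂ) :
    Finsupp.lift (FS M N L) ℂ (Cfg M N L) F (Finsupp.single x c) = c • F x := by
  simp [Finsupp.lift_apply, Finsupp.sum_single_index]

/-- Updating an occupation at site `r` does not change the disorder exponent
centered at `r`, since `ε(0) = 0`. -/
lemma gEx_update_site {M N L : ℕ} (k j : Fin N) (r : Fin L)
    (f : (Fin M × Fin L) → Bool) (g : (Fin N × Fin L) → ℕ) (v : ℕ) :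
    gEx (M := M) k r (f, Function.update g (j, r) v) = gEx k r (f, g) := by
  unfold gEx
  apply Finset.sum_congr rfl
  intro t _
  by_cases h : (k, t) = (j, r)
  · have ht : t = r := congrArg Prod.snd h
    subst ht
    simp
  · simp [Function.update_of_ne h]

lemma Dexp {M N L : ℕ} (k₁ k₂ : Fin N) (r : Fin L)
    (f : (Fin M × Fin L) → Bool) (g : (Fin N × Fin L) → ℕ) :
    (∑ t : Fin L, Int.sign (((t : ℕ) : ℤ) - ((r : ℕ) : ℤ)) *
        ((g (k₁, t) : ℤ) - (g (k₂, t) : ℤ)))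
      = gEx (M := M) k₁ r (f, g) - gEx k₂ r (f, g) := by
  unfold gEx
  rw [← Finset.sum_sub_distrib]
  exact Finset.sum_congr rfl fun t _ => by ring

lemma key1 (M N L : ℕ) (p : ℂ) (hp : p ≠ 0) (s : ℤ → ℂ) (k₁ k₂ : Fin N)
    (hne : k₁ ≠ k₂) (r : Fin L) :
    ADag M N L p s k₁ r * AAny M N L p s k₂ r
      = (bC M N L s k₁ r * bA M N L s k₂ r) * DbosDiag M N L p k₁ k₂ r := by
  apply Finsupp.lhom_ext
  rintro ⟨f, g⟩ c
  have hne1 : ((k₁, r) : Fin N × Fin L) ≠ (k₂, r) := by simp [hne]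
  have hne2 : ((k₂, r) : Fin N × Fin L) ≠ (k₁, r) := by simp [hne.symm]
  simp only [Module.End.mul_apply, ADag, AAny, bC, bA, Gdis, DbosDiag, liftApp]
  by_cases h0 : g (k₂, r) = 0
  · simp only [map_smul, liftApp, smul_smul, h0, reduceIte, smul_zero, map_zero]
  · simp only [h0, if_false, map_smul, liftApp, smul_smul, Function.update_of_ne hne1,
      gEx_update_site, Dexp (M := M) k₁ k₂ r f g]
    congr 1
    rw [show -(gEx (M := M) k₁ r (f, g) - gEx k₂ r (f, g))
        = 1 * gEx (M := M) k₂ r (f, g) + (-1) * gEx k₁ r (f, g) by ring,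
      zpow_add₀ hp]
    ring

lemma key2 (M N L : ℕ) (p : ℂ) (hp : p ≠ 0) (s : ℤ → ℂ) (k₁ k₂ : Fin N)
    (hne : k₁ ≠ k₂) (r : Fin L) :
    tADag M N L p s k₂ r * tAAny M N L p s k₁ r
      = (bC M N L s k₂ r * bA M N L s k₁ r) * DbosDiag M N L p k₁ k₂ r := by
  apply Finsupp.lhom_ext
  rintro ⟨f, g⟩ c
  have hne1 : ((k₁, r) : Fin N × Fin L) ≠ (k₂, r) := by simp [hne]
  simp only [Module.End.mul_apply, tADag, tAAny, bC, bA, Gdis, DbosDiag, liftApp]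
  have hne2 : ((k₂, r) : Fin N × Fin L) ≠ (k₁, r) := by simp [hne.symm]
  by_cases h0 : g (k₁, r) = 0
  · simp only [map_smul, liftApp, smul_smul, h0, reduceIte, smul_zero, map_zero]
  · simp only [h0, if_false, map_smul, liftApp, smul_smul, Function.update_of_ne hne2,
      gEx_update_site, Dexp (M := M) k₁ k₂ r f g]
    congr 1
    rw [show -(gEx (M := M) k₁ r (f, g) - gEx k₂ r (f, g))
        = 1 * gEx (M := M) k₂ r (f, g) + (-1) * gEx k₁ r (f, g) by ring,
      zpow_add₀ hp]
    ring

/-- factorization of the local bosonic anyonic generators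
(`1 ≤ k ≤ N−1`, one-based colour labels) as `q`-boson local generators times a
disorder factor with the inverse deformation parameter. -/
theorem local_bosonic_generator_factorization
    (M N L : ℕ) (hM : 1 ≤ M) (hN : 1 ≤ N) (hMN : 3 ≤ M + N) (hL : 1 ≤ L)
    (p : ℂ) (hp : p ≠ 0) (hp4 : p ^ 4 ≠ 1) (q : ℂ) (hq : q = p ^ 2)
    (s : ℤ → ℂ) (hs : ∀ n : ℤ, s n ^ 2 = qInt q n)
    (k : ℕ) (hk1 : 1 ≤ k) (hk2 : k ≤ N - 1) (r : Fin L) :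
    ADag M N L p s ⟨k - 1, by omega⟩ r * AAny M N L p s ⟨k, by omega⟩ r
      = (bC M N L s ⟨k - 1, by omega⟩ r * bA M N L s ⟨k, by omega⟩ r) *
          DbosDiag M N L p ⟨k - 1, by omega⟩ ⟨k, by omega⟩ r ∧
    tADag M N L p s ⟨k, by omega⟩ r * tAAny M N L p s ⟨k - 1, by omega⟩ r
      = (bC M N L s ⟨k, by omega⟩ r * bA M N L s ⟨k - 1, by omega⟩ r) *
          DbosDiag M N L p ⟨k - 1, by omega⟩ ⟨k, by omega⟩ r := by
  have hne : (⟨k - 1, by omega⟩ : Fin N) ≠ ⟨k, by omega⟩ := by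
    simp [Fin.ext_iff]; omega
  exact ⟨key1 M N L p hp s _ _ hne r, key2 M N L p hp s _ _ hne r⟩

end
end

section
/- The even simple generators built from two q-boson modes, e⁺ = b₁†∘b₂ and e⁻ = b₂†∘b₁, satisfy the quantum Chevalley relation: e⁺e⁻ − e⁻e⁺ equals the diagonal operator |m₁, m₂⟩ ↦ [m₁ − m₂]_q |m₁, m₂⟩, i.e. the commutator equals (q^h − q^{−h})/(q − q^{−1}) where h is the diagonal operator |m₁, m₂⟩ ↦ (m₁ − m₂)|m₁, m₂⟩. -/
/-!
Two-mode `q`-boson realization of an even simple generator pair of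
`U_q(A(M−1,N−1))` on the Fock space `(ℕ × ℕ) →₀ ℂ`.
-/

noncomputable section

/-- The Fock space of two `q`-bosonic modes. -/
abbrev VSpace : Type := (ℕ × ℕ) →₀ ℂ

/-- The `q`-bosonic annihilation operator of the first mode. -/
def b1Ann (s : ℤ → ℂ) : Module.End ℂ VSpace :=
  Finsupp.lift VSpace ℂ (ℕ × ℕ) fun x =>
    if x.1 = 0 then 0 else s (x.1) • Finsupp.single (x.1 - 1, x.2) (1 : ℂ)

/-- The `q`-bosonic creation operator of the first mode. -/
def b1Cre (s : ℤ → ℂ) : Module.End ℂ VSpace :=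
  Finsupp.lift VSpace ℂ (ℕ × ℕ) fun x =>
    s ((x.1 : ℤ) + 1) • Finsupp.single (x.1 + 1, x.2) (1 : ℂ)

/-- The `q`-bosonic annihilation operator of the second mode. -/
def b2Ann (s : ℤ → ℂ) : Module.End ℂ VSpace :=
  Finsupp.lift VSpace ℂ (ℕ × ℕ) fun x =>
    if x.2 = 0 then 0 else s (x.2) • Finsupp.single (x.1, x.2 - 1) (1 : ℂ)

/-- The `q`-bosonic creation operator of the second mode. -/
def b2Cre (s : ℤ → ℂ) : Module.End ℂ VSpace :=
  Finsupp.lift VSpace ℂ (ℕ × ℕ) fun x =>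
    s ((x.2 : ℤ) + 1) • Finsupp.single (x.1, x.2 + 1) (1 : ℂ)

/-- The diagonal operator `(q^h − q^{−h})/(q − q⁻¹) : |m₁, m₂⟩ ↦ [m₁ − m₂]_q |m₁, m₂⟩`. -/
def qCartanDiag (q : ℂ) : Module.End ℂ VSpace :=
  Finsupp.lift VSpace ℂ (ℕ × ℕ) fun x =>
    qInt q ((x.1 : ℤ) - (x.2 : ℤ)) • Finsupp.single x (1 : ℂ)

lemma lift_single_s12 (f : ℕ × ℕ → VSpace) (x : ℕ × ℕ) :
    (Finsupp.lift VSpace ℂ (ℕ × ℕ) f) (Finsupp.single x (1 : ℂ)) = f x := by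
  simp [Finsupp.lift_apply, Finsupp.sum_single_index]

lemma qInt_zero (q : ℂ) : qInt q 0 = 0 := by simp [qInt]

lemma qInt_key (q : ℂ) (hq0 : q ≠ 0) (hq1 : q ^ 2 ≠ 1) (a b : ℤ) :
    qInt q a * qInt q (b + 1) - qInt q b * qInt q (a + 1) = qInt q (a - b) := by
  have hd : q - q⁻¹ ≠ 0 := by
    intro h
    apply hq1
    have hq : q = q⁻¹ := sub_eq_zero.mp h
    calc q ^ 2 = q * q := sq q
    _ = q * q⁻¹ := by rw [← hq]
    _ = 1 := mul_inv_cancel₀ hq0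
  unfold qInt
  rw [div_mul_div_comm, div_mul_div_comm, div_sub_div_same,
    div_eq_div_iff (mul_ne_zero hd hd) hd]
  simp only [neg_add, neg_sub, zpow_add₀ hq0, zpow_sub₀ hq0, zpow_neg, zpow_one]
  ring

/-- the even simple generators `e⁺ = b₁†∘b₂`, `e⁻ = b₂†∘b₁` satisfy
the quantum Chevalley relation `e⁺e⁻ − e⁻e⁺ = (q^h − q^{−h})/(q − q⁻¹)`. -/
theorem even_chevalley_relation (q : ℂ) (hq0 : q ≠ 0) (hq1 : q ^ 2 ≠ 1)
    (s : ℤ → ℂ) (hs : ∀ n : ℤ, s n ^ 2 = qInt q n) :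
    (b1Cre s * b2Ann s) * (b2Cre s * b1Ann s)
      - (b2Cre s * b1Ann s) * (b1Cre s * b2Ann s) = qCartanDiag q := by
  have hs2 : ∀ n : ℤ, s n * s n = qInt q n := fun n => by rw [← sq]; exact hs n
  apply Finsupp.lhom_ext' fun x => LinearMap.ext_ring ?_
  obtain ⟨m₁, m₂⟩ := x
  simp only [LinearMap.comp_apply, LinearMap.sub_apply, Module.End.mul_apply,
    Finsupp.lsingle_apply]
  rcases m₁ with _ | n <;> rcases m₂ with _ | k <;>
    simp only [b1Ann, b1Cre, b2Ann, b2Cre, qCartanDiag, lift_single_s12, map_smul, map_zero,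
      smul_zero, if_pos, if_neg (Nat.succ_ne_zero _), Nat.succ_sub_one, Nat.add_sub_cancel,
      reduceIte, smul_smul, Nat.cast_add, Nat.cast_one, Nat.cast_zero, Nat.cast_ofNat]
  · simp [qInt_zero]
  · rw [zero_sub, ← neg_smul]
    congr 1
    have := qInt_key q hq0 hq1 0 (k + 1)
    rw [qInt_zero, zero_mul, zero_sub, zero_sub] at this
    push_cast
    calc -(s ((k:ℤ)+1) * s (0+1) * s (0+1) * s ((k:ℤ)+1))
        = -(qInt q ((k:ℤ)+1) * qInt q (0+1)) := by
          rw [← hs2, ← hs2]; ring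
    _ = qInt q (0 - ((k:ℤ)+1)) := this
  · rw [sub_zero]
    congr 1
    have := qInt_key q hq0 hq1 ((n:ℤ)+1) 0
    rw [qInt_zero, zero_mul, sub_zero, zero_add, sub_zero] at this
    push_cast
    calc s ((n:ℤ)+1) * s (0+1) * s (0+1) * s ((n:ℤ)+1)
        = qInt q ((n:ℤ)+1) * qInt q (0+1) := by rw [← hs2, ← hs2]; ring
    _ = qInt q (((n:ℤ)+1) - 0) := by rw [show ((0:ℤ)+1) = 1 by ring, this]; ring_nf
  · rw [← sub_smul]
    congr 1
    have := qInt_key q hq0 hq1 ((n:ℤ)+1) ((k:ℤ)+1)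
    calc s ((n:ℤ)+1) * s ((k:ℤ)+1+1) * s ((k:ℤ)+1+1) * s ((n:ℤ)+1)
          - s ((k:ℤ)+1) * s ((n:ℤ)+1+1) * s ((n:ℤ)+1+1) * s ((k:ℤ)+1)
        = qInt q ((n:ℤ)+1) * qInt q ((k:ℤ)+1+1)
          - qInt q ((k:ℤ)+1) * qInt q ((n:ℤ)+1+1) := by
          rw [← hs2, ← hs2, ← hs2, ← hs2]; ring
    _ = qInt q (((n:ℤ)+1) - ((k:ℤ)+1)) := this

end
end

section
/- The anyonic generators attached to non-adjacent simple roots commute (quantum Serre relation in the case ã_{αβ} = 0): for all α, β ∈ {1, …, M+N−1} with |α − β| ≥ 2 (so a_{αβ} = 0), E_α^+ E_β^+ = E_β^+ E_α^+ and E_α^− E_β^− = E_β^− E_α^−. -/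
/-!
Anyonic realization of `U_q(A(M−1,N−1))` on the mixed Fock space of `M` fermionic
and `N` (`q`-deformed) bosonic colours on a one-dimensional lattice `Fin L`.
-/

noncomputable section

/-!
Each generator `E_α^±` is a sum over sites of hops `X_a(r) Y_b(r)` of two anyonic oscillators
of the neighbouring colours `{a, b} = {α - 1, α}`. On the configuration basis every oscillator
is a weighted substitution operator, and two oscillators of different colours commute, except
that two fermionic ones anticommute: each disorder factor only reads its own colour, and of the
two Jordan–Wigner signs exactly the one of the later mode is flipped by the other oscillator.
So hops on disjoint pairs of colours commute up to `(-1)^(deg T * deg U)`, where `deg` counts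
fermionic factors. For non-adjacent roots at most one of the two hops is the odd one (`α = M`),
hence the sign is `+1`.
-/

def TwistedCommute {A : Type*} [Ring A] (ε : ℤ) (a b : A) : Prop :=
  a * b = ε • (b * a)

namespace TwistedCommute

variable {A : Type*} [Ring A] {ε ε' : ℤ} {a b c : A}

theorem mul_right (hab : TwistedCommute ε a b) (hac : TwistedCommute ε' a c) :
    TwistedCommute (ε * ε') a (b * c) := by
  unfold TwistedCommute at *
  rw [← mul_assoc, hab, smul_mul_assoc, mul_assoc, hac, mul_smul_comm, smul_smul, mul_assoc]

theorem mul_left (hac : TwistedCommute ε a c) (hbc : TwistedCommute ε' b c) :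
    TwistedCommute (ε * ε') (a * b) c := by
  unfold TwistedCommute at *
  rw [mul_assoc, hbc, mul_smul_comm, ← mul_assoc, hac, smul_mul_assoc, smul_smul, mul_assoc,
    mul_comm ε]

theorem zero_left (ε : ℤ) (b : A) : TwistedCommute ε 0 b := by
  simp [TwistedCommute]

theorem zero_right (ε : ℤ) (a : A) : TwistedCommute ε a 0 := by
  simp [TwistedCommute]

end TwistedCommute

theorem twistedCommute_one_iff {A : Type*} [Ring A] {a b : A} :
    TwistedCommute 1 a b ↔ Commute a b := by
  rw [TwistedCommute, one_smul]; rfl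

namespace Finsupp

variable {α R : Type*} [CommRing R]

def weightedMapDomain (c : α → R) (φ : α → α) : Module.End R (α →₀ R) :=
  Finsupp.lift (α →₀ R) R α fun x => c x • single (φ x) 1

theorem weightedMapDomain_single (c : α → R) (φ : α → α) (x : α) (b : R) :
    weightedMapDomain c φ (single x b) = single (φ x) (b * c x) := by
  simp [weightedMapDomain]

theorem weightedMapDomain_mul (c d : α → R) (φ ψ : α → α) :
    weightedMapDomain c φ * weightedMapDomain d ψ =
      weightedMapDomain (fun x => d x * c (ψ x)) (φ ∘ ψ) :=
  lhom_ext fun x b => by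
    rw [Module.End.mul_apply, weightedMapDomain_single, weightedMapDomain_single,
      weightedMapDomain_single, Function.comp_apply, mul_assoc]

theorem weightedMapDomain_twistedCommute {c d : α → R} {φ ψ : α → α} (ε : ℤ)
    (hφψ : ∀ x, φ (ψ x) = ψ (φ x)) (hcd : ∀ x, d x * c (ψ x) = ε * (c x * d (φ x))) :
    TwistedCommute ε (weightedMapDomain c φ) (weightedMapDomain d ψ) := by
  rw [TwistedCommute, weightedMapDomain_mul, weightedMapDomain_mul]
  refine lhom_ext fun x b => ?_
  simp only [LinearMap.smul_apply, weightedMapDomain_single, Function.comp_apply, hφψ, hcd,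
    smul_single, zsmul_eq_mul]
  ring_nf

end Finsupp

open Function
open Finsupp (weightedMapDomain weightedMapDomain_mul weightedMapDomain_twistedCommute)

section FockSpace

variable {M N L : ℕ}

theorem lexLt_asymm {m m' : Fin M × Fin L} (h : lexLt m m') : ¬ lexLt m' m := by
  unfold lexLt at *; omega

theorem lexLt_or_lexLt_of_ne {m m' : Fin M × Fin L} (h : m ≠ m') : lexLt m m' ∨ lexLt m' m := by
  obtain ⟨i, r⟩ := m; obtain ⟨j, t⟩ := m'
  simp only [ne_eq, Prod.mk.injEq, Fin.ext_iff] at h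
  unfold lexLt; simp only [Fin.lt_def, Fin.ext_iff]; omega

theorem fSgn_update_of_not_lexLt {f : Fin M × Fin L → Bool} {m : Fin M × Fin L} {i : Fin M}
    {r : Fin L} (hm : ¬ lexLt m (i, r)) (b : Bool) : fSgn (update f m b) i r = fSgn f i r := by
  unfold fSgn
  congr 2
  refine Finset.filter_congr fun m' _ => ?_
  by_cases h : m' = m
  · subst h; simp [hm]
  · rw [update_of_ne h]

theorem fSgn_update_true_of_lexLt {f : Fin M × Fin L → Bool} {m : Fin M × Fin L} {i : Fin M}
    {r : Fin L} (hm : lexLt m (i, r)) (hf : f m = false) :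
    fSgn (update f m true) i r = -fSgn f i r := by
  have hins : (Finset.univ.filter fun m' => lexLt m' (i, r) ∧ update f m true m' = true) =
      insert m (Finset.univ.filter fun m' => lexLt m' (i, r) ∧ f m' = true) := by
    ext m'
    by_cases h : m' = m
    · subst h; simp [hm]
    · simp [h]
  unfold fSgn
  rw [hins, Finset.card_insert_of_notMem (by simp [hf]), pow_succ, mul_neg_one]

theorem fSgn_update_of_lexLt {f : Fin M × Fin L → Bool} {m : Fin M × Fin L} {i : Fin M}
    {r : Fin L} (hm : lexLt m (i, r)) {b : Bool} (hb : f m ≠ b) :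
    fSgn (update f m b) i r = -fSgn f i r := by
  cases b
  · have hf : f m = true := by simpa using hb
    have h := fSgn_update_true_of_lexLt (f := update f m false) hm (update_self ..)
    rw [Function.update_idem, update_eq_self_iff.mpr hf.symm] at h
    rw [h, neg_neg]
  · exact fSgn_update_true_of_lexLt hm (by simpa using hb)

def jwCoef (v : Bool) (i : Fin M) (r : Fin L) (f : Fin M × Fin L → Bool) : ℂ :=
  if f (i, r) = v then fSgn f i r else 0

theorem jwCoef_mul_jwCoef_update {i j : Fin M} {r t : Fin L} (h : (i, r) ≠ (j, t)) (v w : Bool)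
    (f : Fin M × Fin L → Bool) :
    jwCoef w j t f * jwCoef v i r (update f (j, t) (!w)) =
      -(jwCoef v i r f * jwCoef w j t (update f (i, r) (!v))) := by
  unfold jwCoef
  rw [update_of_ne h, update_of_ne h.symm]
  by_cases hv : f (i, r) = v
  · by_cases hw : f (j, t) = w
    · have hv' : f (i, r) ≠ !v := by simp [hv]
      have hw' : f (j, t) ≠ !w := by simp [hw]
      simp only [if_pos hv, if_pos hw]
      rcases lexLt_or_lexLt_of_ne h with hlt | hlt
      · rw [fSgn_update_of_lexLt hlt hv', fSgn_update_of_not_lexLt (lexLt_asymm hlt)]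
        ring
      · rw [fSgn_update_of_lexLt hlt hw', fSgn_update_of_not_lexLt (lexLt_asymm hlt)]
        ring
    · simp [hw]
  · simp [hv]

def jwFlip (v : Bool) (i : Fin M) (r : Fin L) : Module.End ℂ (FS M N L) :=
  weightedMapDomain (fun x => jwCoef v i r x.1) fun x => (update x.1 (i, r) (!v), x.2)

def bosonShift (w : ℕ → ℂ) (δ : ℕ → ℕ) (k : Fin N) (r : Fin L) : Module.End ℂ (FS M N L) :=
  weightedMapDomain (fun x => w (x.2 (k, r))) fun x => (x.1, update x.2 (k, r) (δ (x.2 (k, r))))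

theorem cA_eq_jwFlip (i : Fin M) (r : Fin L) : cA M N L i r = jwFlip true i r := by
  unfold cA jwFlip weightedMapDomain jwCoef
  congr 1; funext x; by_cases h : x.1 (i, r) = true <;> simp [h]

theorem cC_eq_jwFlip (i : Fin M) (r : Fin L) : cC M N L i r = jwFlip false i r := by
  unfold cC jwFlip weightedMapDomain jwCoef
  congr 1; funext x; by_cases h : x.1 (i, r) = false <;> simp [h]

theorem bA_eq_bosonShift (s : ℤ → ℂ) (k : Fin N) (r : Fin L) :
    bA M N L s k r = bosonShift (fun n => if n = 0 then 0 else s n) (· - 1) k r := by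
  unfold bA bosonShift weightedMapDomain
  congr 1; funext x; by_cases h : x.2 (k, r) = 0 <;> simp [h]

theorem bC_eq_bosonShift (s : ℤ → ℂ) (k : Fin N) (r : Fin L) :
    bC M N L s k r = bosonShift (fun n => s ((n : ℤ) + 1)) (· + 1) k r := rfl

theorem Fdis_eq_weightedMapDomain (p : ℂ) (σ : ℤ) (i : Fin M) (r : Fin L) :
    Fdis M N L p σ i r = weightedMapDomain (fun x => p ^ (σ * fEx i r x)) id := rfl

theorem Gdis_eq_weightedMapDomain (p : ℂ) (σ : ℤ) (k : Fin N) (r : Fin L) :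
    Gdis M N L p σ k r = weightedMapDomain (fun x => p ^ (σ * gEx k r x)) id := rfl

theorem fEx_update_of_ne {i j : Fin M} (hij : i ≠ j) (r t : Fin L) (f : Fin M × Fin L → Bool)
    (b : Bool) (g g' : Fin N × Fin L → ℕ) :
    fEx i r ((update f (j, t) b, g) : Cfg M N L) = fEx i r ((f, g') : Cfg M N L) := by
  unfold fEx
  refine Finset.sum_congr rfl fun u _ => ?_
  simp only [update_of_ne (show (i, u) ≠ (j, t) by simp [hij])]

theorem gEx_update_of_ne {k l : Fin N} (hkl : k ≠ l) (r t : Fin L) (f f' : Fin M × Fin L → Bool)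
    (g : Fin N × Fin L → ℕ) (n : ℕ) :
    gEx k r ((f, update g (l, t) n) : Cfg M N L) = gEx k r ((f', g) : Cfg M N L) := by
  unfold gEx
  refine Finset.sum_congr rfl fun u _ => ?_
  simp only [update_of_ne (show (k, u) ≠ (l, t) by simp [hkl])]

end FockSpace

section Anyons

variable {M N L : ℕ}

theorem twistedCommute_Fdis_mul_jwFlip {i j : Fin M} (hij : i ≠ j) (p : ℂ) (σ τ : ℤ)
    (v w : Bool) (r t : Fin L) :
    TwistedCommute (-1) (Fdis M N L p σ i r * jwFlip v i r)
      (Fdis M N L p τ j t * jwFlip w j t) := by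
  have hne : ((i, r) : Fin M × Fin L) ≠ (j, t) := by simp [hij]
  rw [Fdis_eq_weightedMapDomain, Fdis_eq_weightedMapDomain, jwFlip, jwFlip,
    weightedMapDomain_mul, weightedMapDomain_mul]
  refine weightedMapDomain_twistedCommute (-1) (fun x => Prod.ext (update_comm hne.symm _ _ _) rfl)
    fun x => ?_
  simp only [id, comp_apply]
  rw [update_comm hne.symm, fEx_update_of_ne hij (g' := x.2), update_comm hne,
    fEx_update_of_ne hij.symm (g' := x.2)]
  push_cast
  linear_combination p ^ (τ * fEx j t (update x.1 (j, t) !w, x.2)) *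
    p ^ (σ * fEx i r (update x.1 (i, r) !v, x.2)) * jwCoef_mul_jwCoef_update hne v w x.1

theorem commute_Fdis_mul_jwFlip_Gdis_mul_bosonShift (p : ℂ) (σ τ : ℤ) (v : Bool) (i : Fin M)
    (r : Fin L) (w : ℕ → ℂ) (δ : ℕ → ℕ) (k : Fin N) (t : Fin L) :
    Commute (Fdis M N L p σ i r * jwFlip v i r) (Gdis M N L p τ k t * bosonShift w δ k t) := by
  rw [← twistedCommute_one_iff (A := Module.End ℂ (FS M N L)), Fdis_eq_weightedMapDomain,
    Gdis_eq_weightedMapDomain, jwFlip, bosonShift, weightedMapDomain_mul, weightedMapDomain_mul]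
  refine weightedMapDomain_twistedCommute 1 (fun x => rfl) fun x => ?_
  rw [Int.cast_one, one_mul, mul_comm]
  rfl

theorem commute_Gdis_mul_bosonShift {k l : Fin N} (hkl : k ≠ l) (p : ℂ) (σ τ : ℤ)
    (w w' : ℕ → ℂ) (δ δ' : ℕ → ℕ) (r t : Fin L) :
    Commute (Gdis M N L p σ k r * bosonShift w δ k r)
      (Gdis M N L p τ l t * bosonShift w' δ' l t) := by
  have hne : ((k, r) : Fin N × Fin L) ≠ (l, t) := by simp [hkl]
  rw [← twistedCommute_one_iff (A := Module.End ℂ (FS M N L)), Gdis_eq_weightedMapDomain,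
    Gdis_eq_weightedMapDomain, bosonShift, bosonShift, weightedMapDomain_mul, weightedMapDomain_mul]
  refine weightedMapDomain_twistedCommute 1 (fun x => ?_) fun x => ?_
  · simp only [id, comp_apply, update_of_ne hne, update_of_ne hne.symm]
    rw [update_comm hne]
  · simp only [id, comp_apply, update_of_ne hne, update_of_ne hne.symm]
    rw [update_comm hne.symm, gEx_update_of_ne hkl (f' := x.1), update_comm hne,
      gEx_update_of_ne hkl.symm (f' := x.1), Int.cast_one, one_mul, mul_comm]

end Anyons

section Colours

variable (M N L : ℕ)

def colourDegree (c : ℕ) : ℕ := if c < M then 1 else 0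

/-- Colours are numbered globally: `c < M` is the fermionic colour `c`, `M ≤ c < M + N` the
bosonic colour `c - M`. -/
def anyon (p : ℂ) (s : ℤ → ℂ) (σ : ℤ) (dag : Bool) (c : ℕ) (r : Fin L) :
    Module.End ℂ (FS M N L) :=
  if hc : c < M then
    Fdis M N L p σ ⟨c, hc⟩ r * bif dag then cC M N L ⟨c, hc⟩ r else cA M N L ⟨c, hc⟩ r
  else if hc' : c - M < N then
    Gdis M N L p σ ⟨c - M, hc'⟩ r *
      bif dag then bC M N L s ⟨c - M, hc'⟩ r else bA M N L s ⟨c - M, hc'⟩ r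
  else 0

variable {M N L}

theorem cond_cC_cA_eq_jwFlip (dag : Bool) (i : Fin M) (r : Fin L) :
    (bif dag then cC M N L i r else cA M N L i r) = jwFlip (!dag) i r := by
  cases dag
  exacts [cA_eq_jwFlip i r, cC_eq_jwFlip i r]

theorem exists_cond_bC_bA_eq_bosonShift (s : ℤ → ℂ) (dag : Bool) (k : Fin N) (r : Fin L) :
    ∃ w δ, (bif dag then bC M N L s k r else bA M N L s k r) = bosonShift w δ k r := by
  cases dag
  exacts [⟨_, _, bA_eq_bosonShift s k r⟩, ⟨_, _, bC_eq_bosonShift s k r⟩]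

theorem anyon_twistedCommute (p : ℂ) (s : ℤ → ℂ) {c d : ℕ} (hcd : c ≠ d) (σ τ : ℤ)
    (dag dag' : Bool) (r t : Fin L) :
    TwistedCommute ((-1) ^ (colourDegree M c * colourDegree M d))
      (anyon M N L p s σ dag c r) (anyon M N L p s τ dag' d t) := by
  unfold anyon colourDegree
  by_cases hc : c < M <;> by_cases hd : d < M
  · simp only [dif_pos hc, dif_pos hd, if_pos hc, if_pos hd, cond_cC_cA_eq_jwFlip]
    exact twistedCommute_Fdis_mul_jwFlip (Fin.ne_of_val_ne hcd) p σ τ _ _ r t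
  · simp only [dif_pos hc, dif_neg hd, if_neg hd, mul_zero, pow_zero, cond_cC_cA_eq_jwFlip]
    split_ifs with hd'
    · obtain ⟨w, δ, h⟩ := exists_cond_bC_bA_eq_bosonShift s dag' ⟨d - M, hd'⟩ t
      rw [h, twistedCommute_one_iff]
      exact commute_Fdis_mul_jwFlip_Gdis_mul_bosonShift ..
    · exact .zero_right _ _
  · simp only [dif_neg hc, dif_pos hd, if_neg hc, zero_mul, pow_zero, cond_cC_cA_eq_jwFlip]
    split_ifs with hc'
    · obtain ⟨w, δ, h⟩ := exists_cond_bC_bA_eq_bosonShift s dag ⟨c - M, hc'⟩ r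
      rw [h, twistedCommute_one_iff]
      exact (commute_Fdis_mul_jwFlip_Gdis_mul_bosonShift ..).symm
    · exact .zero_left _ _
  · simp only [dif_neg hc, dif_neg hd, if_neg hc, if_neg hd, mul_zero, pow_zero]
    split_ifs with hc' hd'
    · obtain ⟨w, δ, h⟩ := exists_cond_bC_bA_eq_bosonShift s dag ⟨c - M, hc'⟩ r
      obtain ⟨w', δ', h'⟩ := exists_cond_bC_bA_eq_bosonShift s dag' ⟨d - M, hd'⟩ t
      rw [h, h', twistedCommute_one_iff]
      exact commute_Gdis_mul_bosonShift (by simp [Fin.ext_iff]; omega) ..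
    all_goals first | exact .zero_left _ _ | exact .zero_right _ _

theorem exists_Ep_eq_sum (p : ℂ) (s : ℤ → ℂ) {α : ℕ} (h1 : 1 ≤ α) (h2 : α ≤ M + N - 1) :
    ∃ σ τ : ℤ, Ep M N L p s α =
      ∑ r, anyon M N L p s σ true (α - 1) r * anyon M N L p s τ false α r := by
  unfold Ep
  rcases lt_trichotomy α M with hα | rfl | hα
  · refine ⟨1, -1, ?_⟩
    simp [anyon, aDag, aAny, h1, hα, show α - 1 < M by omega]
  · refine ⟨1, 1, ?_⟩
    simp [anyon, aDag, AAny, show α - 1 < α by omega, h1,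
      show 0 < N by omega, show 1 ≤ N by omega]
  · refine ⟨-1, 1, ?_⟩
    simp [anyon, ADag, AAny, hα.ne', show ¬ α < M by omega, show ¬ α - 1 < M by omega,
      hα, h2, show α - M < N by omega, show α - M - 1 < N by omega, Nat.sub_right_comm α 1 M]

theorem exists_Em_eq_sum (p : ℂ) (s : ℤ → ℂ) {α : ℕ} (h1 : 1 ≤ α) (h2 : α ≤ M + N - 1) :
    ∃ σ τ : ℤ, Em M N L p s α =
      ∑ r, anyon M N L p s σ true α r * anyon M N L p s τ false (α - 1) r := by
  unfold Em
  rcases lt_trichotomy α M with hα | rfl | hα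
  · refine ⟨-1, 1, ?_⟩
    simp [anyon, taDag, taAny, h1, hα, show α - 1 < M by omega]
  · refine ⟨1, 1, ?_⟩
    simp [anyon, tADag, taAny, show α - 1 < α by omega, h1,
      show 0 < N by omega, show 1 ≤ N by omega]
  · refine ⟨1, -1, ?_⟩
    simp [anyon, tADag, tAAny, hα.ne', show ¬ α < M by omega, show ¬ α - 1 < M by omega,
      hα, h2, show α - M < N by omega, show α - M - 1 < N by omega, Nat.sub_right_comm α 1 M]

theorem commute_sum_anyon_hops (p : ℂ) (s : ℤ → ℂ) {a b c d : ℕ} (hac : a ≠ c) (had : a ≠ d)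
    (hbc : b ≠ c) (hbd : b ≠ d)
    (heven : Even (colourDegree M a + colourDegree M b) ∨
      Even (colourDegree M c + colourDegree M d))
    (σ₁ τ₁ σ₂ τ₂ : ℤ) (x y x' y' : Bool) :
    Commute (∑ r : Fin L, anyon M N L p s σ₁ x a r * anyon M N L p s τ₁ y b r)
      (∑ r : Fin L, anyon M N L p s σ₂ x' c r * anyon M N L p s τ₂ y' d r) := by
  refine Commute.sum_left _ _ _ fun r _ => Commute.sum_right _ _ _ fun t _ => ?_
  have h := ((anyon_twistedCommute (M := M) (N := N) p s hac σ₁ σ₂ x x' r t).mul_right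
      (anyon_twistedCommute p s had σ₁ τ₂ x y' r t)).mul_left
    ((anyon_twistedCommute p s hbc τ₁ σ₂ y x' r t).mul_right
      (anyon_twistedCommute p s hbd τ₁ τ₂ y y' r t))
  rwa [← pow_add, ← pow_add, ← pow_add, ← mul_add, ← mul_add, ← add_mul,
    (heven.elim (·.mul_right _) (·.mul_left _)).neg_one_pow, twistedCommute_one_iff] at h

theorem even_colourDegree_pred_add {α : ℕ} (h1 : 1 ≤ α) (hα : α ≠ M) :
    Even (colourDegree M (α - 1) + colourDegree M α) := by
  unfold colourDegree
  split_ifs <;> first | omega | decide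

end Colours

theorem anyonic_nonadjacent_commute_general
    (M N L : ℕ) (p : ℂ) (s : ℤ → ℂ) :
    ∀ α β : ℕ, 1 ≤ α → α ≤ M + N - 1 → 1 ≤ β → β ≤ M + N - 1 →
      (α + 2 ≤ β ∨ β + 2 ≤ α) →
      Ep M N L p s α * Ep M N L p s β = Ep M N L p s β * Ep M N L p s α ∧
      Em M N L p s α * Em M N L p s β = Em M N L p s β * Em M N L p s α := by
  intro α β hα1 hα2 hβ1 hβ2 hαβ
  have heven : Even (colourDegree M (α - 1) + colourDegree M α) ∨
      Even (colourDegree M (β - 1) + colourDegree M β) := by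
    by_cases hα : α = M
    · exact .inr (even_colourDegree_pred_add hβ1 (by omega))
    · exact .inl (even_colourDegree_pred_add hα1 hα)
  obtain ⟨σ₁, τ₁, hEpα⟩ := exists_Ep_eq_sum (L := L) p s hα1 hα2
  obtain ⟨σ₂, τ₂, hEpβ⟩ := exists_Ep_eq_sum (L := L) p s hβ1 hβ2
  obtain ⟨σ₃, τ₃, hEmα⟩ := exists_Em_eq_sum (L := L) p s hα1 hα2
  obtain ⟨σ₄, τ₄, hEmβ⟩ := exists_Em_eq_sum (L := L) p s hβ1 hβ2
  constructor
  · rw [hEpα, hEpβ]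
    exact commute_sum_anyon_hops p s (by omega) (by omega) (by omega) (by omega) heven ..
  · rw [hEmα, hEmβ]
    refine commute_sum_anyon_hops p s (by omega) (by omega) (by omega) (by omega) ?_ ..
    simpa only [add_comm] using heven

/-- anyonic generators attached to non-adjacent simple roots commute. -/
theorem anyonic_nonadjacent_commute
    (M N L : ℕ) (hM : 1 ≤ M) (hN : 1 ≤ N) (hMN : 3 ≤ M + N) (hL : 1 ≤ L)
    (p : ℂ) (hp : p ≠ 0) (hp4 : p ^ 4 ≠ 1) (q : ℂ) (hq : q = p ^ 2)
    (s : ℤ → ℂ) (hs : ∀ n : ℤ, s n ^ 2 = qInt q n) :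
    ∀ α β : ℕ, 1 ≤ α → α ≤ M + N - 1 → 1 ≤ β → β ≤ M + N - 1 →
      (α + 2 ≤ β ∨ β + 2 ≤ α) →
      Ep M N L p s α * Ep M N L p s β = Ep M N L p s β * Ep M N L p s α ∧
      Em M N L p s α * Em M N L p s β = Em M N L p s β * Em M N L p s α :=
  anyonic_nonadjacent_commute_general M N L p s

end
end
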